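/- Let μ > 0, let X be an integrable random variable with X ≥ 0 almost surely and E[X] > μ, and let X_1, X_2, … be an i.i.d. sample of X. Let π be a probability density on [0,1] such that for all 0 < b < 1 there is 0 < a < b with ∫_a^b π(c) dc > 0. Define the integrated test supermartingale M_n(π) = ∫_0^1 M_n(c) π(c) dc, where M_n(c) = ∏_{i=1}^n ((1−c) + c·X_i/μ). Then M_n(π) → +∞ almost surely as n → ∞. -/

import Mathlib

/-!
For a fixed bet `c ∈ [0, 1)`, `log M_n(c)` is a sum of i.i.d. terms, so by the strong law
`M_n(c) → ∞` a.s. as soon as the growth rate `E[log (1 - c + c X/μ)]` is positive. Its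
derivative at `c = 0` is `E[X]/μ - 1 > 0`, so the growth rate is positive on some interval
`(0, ε)`; choose `0 < a < b < ε` with `∫_a^b π > 0`. Since `c ↦ log M_n(c)` is concave,
`M_n(c) ≥ min (M_n(a), M_n(b))` on `[a, b]`, whence `M_n(π) ≥ min (M_n(a), M_n(b)) ∫_a^b π → ∞`.
-/

open MeasureTheory ProbabilityTheory Filter Topology Set

namespace Real

lemma abs_log_one_add_le_two_mul_abs {t : ℝ} (ht : -(1 / 2) ≤ t) : |log (1 + t)| ≤ 2 * |t| := by
  have hpos : 0 < 1 + t := by linarith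
  rw [abs_le]
  constructor
  · rcases le_or_gt 0 t with ht0 | ht0
    · linarith [log_nonneg (by linarith : (1 : ℝ) ≤ 1 + t), abs_nonneg t]
    · have hinv : (1 + t)⁻¹ ≤ 1 - 2 * t := by
        rw [inv_le_iff_one_le_mul₀ hpos]
        nlinarith
      rw [abs_of_neg ht0]
      linarith [one_sub_inv_le_log_of_pos hpos]
  · linarith [log_le_sub_one_of_pos hpos, le_abs_self t, abs_nonneg t]

lemma abs_log_one_sub_add_mul_le {c x : ℝ} (hx : 0 ≤ x) (hc0 : 0 ≤ c) (hc : c ≤ 1 / 2) :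
    |log (1 - c + c * x)| ≤ 2 * (c * |x - 1|) := by
  have h := abs_log_one_add_le_two_mul_abs (t := c * (x - 1)) (by nlinarith)
  rwa [abs_mul, abs_of_nonneg hc0, show 1 + c * (x - 1) = 1 - c + c * x by ring] at h

lemma tendsto_log_one_sub_add_mul_div (x : ℝ) :
    Tendsto (fun c => log (1 - c + c * x) / c) (𝓝[>] 0) (𝓝 (x - 1)) := by
  have hd : HasDerivAt (fun c => log (1 - c + c * x)) (x - 1) 0 := by
    have h := (((hasDerivAt_id (0 : ℝ)).const_sub 1).add
      ((hasDerivAt_id (0 : ℝ)).mul_const x)).log (by simp)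
    simpa [sub_eq_neg_add] using h
  simpa [div_eq_inv_mul] using hd.tendsto_slope_zero_right

lemma concaveOn_log_one_sub_add_mul {x : ℝ} (hx : 0 ≤ x) :
    ConcaveOn ℝ (Ico 0 1) fun c => log (1 - c + c * x) := by
  have h := strictConcaveOn_log_Ioi.concaveOn.comp_affineMap (AffineMap.lineMap (1 : ℝ) x)
  have hline : ∀ c : ℝ, AffineMap.lineMap (1 : ℝ) x c = 1 - c + c * x := fun c => by
    rw [AffineMap.lineMap_apply_ring']
    ring
  simp only [Function.comp_def, hline] at h
  refine h.subset (fun c hc => ?_) (convex_Ico 0 1)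
  simp only [mem_preimage, hline, mem_Ioi]
  nlinarith [hc.1, hc.2]

end Real

lemma ConcaveOn.finset_sum {ι E : Type*} [AddCommMonoid E] [Module ℝ E] {s : Set E}
    (hs : Convex ℝ s) (t : Finset ι) {f : ι → E → ℝ} (hf : ∀ i ∈ t, ConcaveOn ℝ s (f i)) :
    ConcaveOn ℝ s fun c => ∑ i ∈ t, f i c := by
  have h := Finset.sum_induction f (ConcaveOn ℝ s) (fun _ _ => ConcaveOn.add)
    (concaveOn_const 0 hs) hf
  rwa [show ∑ i ∈ t, f i = fun c => ∑ i ∈ t, f i c from funext fun c => Finset.sum_apply c t f]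
    at h

open Real in
lemma min_prod_le_prod_one_sub_add_mul {ι : Type*} (s : Finset ι) {x : ι → ℝ}
    (hx : ∀ i ∈ s, 0 ≤ x i) {a b c : ℝ} (ha : 0 ≤ a) (hb : b < 1) (hc : c ∈ Icc a b) :
    min (∏ i ∈ s, (1 - a + a * x i)) (∏ i ∈ s, (1 - b + b * x i)) ≤
      ∏ i ∈ s, (1 - c + c * x i) := by
  have hab : a ≤ b := hc.1.trans hc.2
  have hsub : Icc a b ⊆ Ico 0 1 := Icc_subset_Ico ha hb
  have hexp : ∀ d ∈ Ico (0 : ℝ) 1,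
      ∏ i ∈ s, (1 - d + d * x i) = exp (∑ i ∈ s, log (1 - d + d * x i)) := by
    intro d hd
    rw [exp_sum]
    refine Finset.prod_congr rfl fun i hi => (exp_log ?_).symm
    nlinarith [hx i hi, hd.1, hd.2]
  have hconc := ConcaveOn.finset_sum (convex_Ico 0 1) s
    fun i hi => concaveOn_log_one_sub_add_mul (hx i hi)
  have hmin := hconc.ge_on_segment (hsub (left_mem_Icc.2 hab)) (hsub (right_mem_Icc.2 hab))
    (by rwa [segment_eq_Icc hab])
  rw [hexp a (hsub (left_mem_Icc.2 hab)), hexp b (hsub (right_mem_Icc.2 hab)), hexp c (hsub hc),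
    ← exp_monotone.map_min]
  exact exp_le_exp.2 hmin

lemma tendsto_intervalIntegral_mul_atTop {F : ℕ → ℝ → ℝ} {G : ℕ → ℝ} {w : ℝ → ℝ}
    {u v a b : ℝ} (hua : u ≤ a) (hab : a ≤ b) (hbv : b ≤ v)
    (hF : ∀ n, Continuous (F n)) (hF0 : ∀ n, ∀ c ∈ Icc u v, 0 ≤ F n c)
    (hw0 : ∀ c ∈ Icc u v, 0 ≤ w c) (hwint : IntervalIntegrable w volume u v)
    (hwab : 0 < ∫ c in a..b, w c) (hG : ∀ n, ∀ c ∈ Icc a b, G n ≤ F n c)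
    (hGtop : Tendsto G atTop atTop) :
    Tendsto (fun n => ∫ c in u..v, F n c * w c) atTop atTop := by
  have hsub : uIcc a b ⊆ uIcc u v := by
    rw [uIcc_of_le hab, uIcc_of_le (hua.trans (hab.trans hbv))]
    exact Icc_subset_Icc hua hbv
  refine tendsto_atTop_mono (fun n => ?_) (hGtop.atTop_mul_const hwab)
  have hFw : IntervalIntegrable (fun c => F n c * w c) volume u v :=
    hwint.continuousOn_mul (hF n).continuousOn
  calc G n * ∫ c in a..b, w c = ∫ c in a..b, G n * w c :=
        (intervalIntegral.integral_const_mul _ _).symm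
    _ ≤ ∫ c in a..b, F n c * w c := by
        refine intervalIntegral.integral_mono_on hab ((hwint.mono_set hsub).const_mul _)
          (hFw.mono_set hsub) fun c hc => ?_
        exact mul_le_mul_of_nonneg_right (hG n c hc) (hw0 c ⟨hua.trans hc.1, hc.2.trans hbv⟩)
    _ ≤ ∫ c in u..v, F n c * w c := by
        refine intervalIntegral.integral_mono_interval hua hab hbv ?_ hFw
        refine ae_restrict_of_forall_mem measurableSet_Ioc fun c hc => ?_
        exact mul_nonneg (hF0 n c (Ioc_subset_Icc_self hc)) (hw0 c (Ioc_subset_Icc_self hc))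

section Probability

variable {Ω : Type*} {mΩ : MeasurableSpace Ω} {P : Measure Ω}

open Real

lemma eventually_integral_log_one_sub_add_mul_pos [IsProbabilityMeasure P] {V : Ω → ℝ}
    (hV : Integrable V P) (hV0 : ∀ᵐ ω ∂P, 0 ≤ V ω) (hV1 : 1 < ∫ ω, V ω ∂P) :
    ∀ᶠ c in 𝓝[>] 0, 0 < ∫ ω, log (1 - c + c * V ω) ∂P := by
  have hlim : Tendsto (fun c => ∫ ω, log (1 - c + c * V ω) / c ∂P) (𝓝[>] 0)
      (𝓝 (∫ ω, (V ω - 1) ∂P)) := by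
    refine tendsto_integral_filter_of_dominated_convergence (fun ω => 2 * |V ω - 1|)
      (Eventually.of_forall fun c => ?_) ?_ ((hV.sub (integrable_const 1)).abs.const_mul 2)
      (Eventually.of_forall fun ω => tendsto_log_one_sub_add_mul_div (V ω))
    · exact ((measurable_log.comp_aemeasurable (by fun_prop)).div_const c).aestronglyMeasurable
    · filter_upwards [Ioc_mem_nhdsGT one_half_pos] with c hc
      filter_upwards [hV0] with ω hω
      rw [norm_div, norm_of_nonneg hc.1.le, div_le_iff₀ hc.1, norm_eq_abs]
      linarith [abs_log_one_sub_add_mul_le hω hc.1.le hc.2]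
  have hmean : 0 < ∫ ω, (V ω - 1) ∂P := by
    rw [integral_sub hV (integrable_const 1), integral_const]
    simp only [probReal_univ, smul_eq_mul, one_mul]
    linarith
  filter_upwards [hlim.eventually (eventually_gt_nhds hmean), self_mem_nhdsWithin]
    with c hc (hc0 : 0 < c)
  rw [integral_div] at hc
  exact (div_pos_iff_of_pos_right hc0).1 hc

lemma ae_tendsto_sum_atTop_of_integral_pos {Y : ℕ → Ω → ℝ} (hint : Integrable (Y 0) P)
    (hindep : Pairwise fun i j => IndepFun (Y i) (Y j) P) (hident : ∀ i, IdentDistrib (Y i) (Y 0) P P)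
    (hpos : 0 < ∫ ω, Y 0 ω ∂P) :
    ∀ᵐ ω ∂P, Tendsto (fun n => ∑ i ∈ Finset.range n, Y i ω) atTop atTop := by
  filter_upwards [strong_law_ae_real Y hint hindep hident] with ω hω
  refine (Tendsto.atTop_mul_pos hpos tendsto_natCast_atTop_atTop hω).congr' ?_
  filter_upwards [eventually_ne_atTop 0] with n hn
  field_simp

lemma ae_tendsto_prod_atTop_of_integral_log_pos {X : ℕ → Ω → ℝ} {X₀ : Ω → ℝ}
    (hindep : Pairwise fun i j => IndepFun (X i) (X j) P) (hident : ∀ i, IdentDistrib (X i) X₀ P P)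
    {f : ℝ → ℝ} (hf : Measurable f) (hfpos : ∀ᵐ ω ∂P, 0 < f (X₀ ω))
    (hlog : 0 < ∫ ω, log (f (X₀ ω)) ∂P) :
    ∀ᵐ ω ∂P, Tendsto (fun n => ∏ i ∈ Finset.range n, f (X i ω)) atTop atTop := by
  have hg : Measurable (log ∘ f) := measurable_log.comp hf
  have hidentLog : ∀ i, IdentDistrib (log ∘ f ∘ X i) (log ∘ f ∘ X₀) P P :=
    fun i => (hident i).comp hg
  have hsum := ae_tendsto_sum_atTop_of_integral_pos (Y := fun i => log ∘ f ∘ X i)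
    ((hidentLog 0).integrable_iff.2 (Integrable.of_integral_ne_zero hlog.ne'))
    (fun i j hij => (hindep hij).comp hg hg) (fun i => (hidentLog i).trans (hidentLog 0).symm)
    ((hidentLog 0).integral_eq.trans_gt hlog)
  have hpos : ∀ᵐ ω ∂P, ∀ i, 0 < f (X i ω) :=
    ae_all_iff.2 fun i => (hident i).symm.ae_snd (measurableSet_lt measurable_const hf) hfpos
  filter_upwards [hsum, hpos] with ω hω hωpos
  refine (tendsto_exp_atTop.comp hω).congr fun n => ?_
  simp only [Function.comp_apply, exp_sum, exp_log (hωpos _)]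

end Probability

theorem integrated_test_supermartingale_tendsto_top_general
    {Ω : Type*} {mΩ : MeasurableSpace Ω} (P : Measure Ω) [IsProbabilityMeasure P]
    (μ : ℝ) (hμ : 0 < μ)
    (X₀ : Ω → ℝ) (hX₀int : Integrable X₀ P) (hX₀pos : ∀ᵐ ω ∂P, 0 ≤ X₀ ω)
    (hEX₀ : μ < ∫ ω, X₀ ω ∂P)
    (X : ℕ → Ω → ℝ)
    (hindep : iIndepFun X P)
    (hident : ∀ i, IdentDistrib (X i) X₀ P P)
    (π : ℝ → ℝ)
    (hπ0 : ∀ c ∈ Set.Icc (0 : ℝ) 1, 0 ≤ π c)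
    (hπint : IntervalIntegrable π volume 0 1)
    (hπpos : ∀ b ∈ Set.Ioo (0 : ℝ) 1, ∃ a, 0 < a ∧ a < b ∧ 0 < ∫ c in a..b, π c) :
    ∀ᵐ ω ∂P, Tendsto
      (fun n => ∫ c in (0 : ℝ)..1,
        (∏ i ∈ Finset.range n, ((1 - c) + c * X i ω / μ)) * π c) atTop atTop := by
  have hX : ∀ᵐ ω ∂P, ∀ i, 0 ≤ X i ω :=
    ae_all_iff.2 fun i => (hident i).symm.ae_snd measurableSet_Ici hX₀pos
  obtain ⟨ε, hε : 0 < ε, hgrowthRate⟩ := mem_nhdsGT_iff_exists_Ioo_subset.1 <|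
    eventually_integral_log_one_sub_add_mul_pos (hX₀int.div_const μ)
      (hX₀pos.mono fun ω h => div_nonneg h hμ.le) (by rwa [integral_div, one_lt_div hμ])
  have hgrowth : ∀ c ∈ Ioo 0 ε, c < 1 → ∀ᵐ ω ∂P,
      Tendsto (fun n => ∏ i ∈ Finset.range n, (1 - c + c * (X i ω / μ))) atTop atTop :=
    fun c hc hc1 => ae_tendsto_prod_atTop_of_integral_log_pos
      (fun i j hij => hindep.indepFun hij) hident (f := fun x => 1 - c + c * (x / μ))
      (by fun_prop) (hX₀pos.mono fun ω h => by have := div_nonneg h hμ.le; nlinarith [hc.1])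
      (hgrowthRate hc)
  have hb : min (ε / 2) (1 / 2) ∈ Ioo 0 ε :=
    ⟨by positivity, by linarith [min_le_left (ε / 2) (1 / 2)]⟩
  have hb1 : min (ε / 2) (1 / 2) < 1 := by linarith [min_le_right (ε / 2) (1 / 2)]
  obtain ⟨a, ha0, hab, hπab⟩ := hπpos _ ⟨hb.1, hb1⟩
  filter_upwards [hgrowth a ⟨ha0, hab.trans hb.2⟩ (hab.trans hb1), hgrowth _ hb hb1, hX]
    with ω hωa hωb hω
  have hx : ∀ i, 0 ≤ X i ω / μ := fun i => div_nonneg (hω i) hμ.le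
  simp_rw [mul_div_assoc]
  exact tendsto_intervalIntegral_mul_atTop ha0.le hab.le hb1.le (fun n => by fun_prop)
    (fun n c hc => Finset.prod_nonneg fun i _ => by nlinarith [hx i, hc.1, hc.2]) hπ0 hπint hπab
    (fun n c hc => min_prod_le_prod_one_sub_add_mul _ (fun i _ => hx i) ha0.le hb1 hc)
    (tendsto_inf_atTop _ hωa hωb)

/-- Consistency of the integrated test supermartingale.  Let `μ > 0`, let `X₀` be integrable
with `X₀ ≥ 0` a.s. and `E[X₀] > μ`, let `X 0, X 1, …` be an i.i.d. sample of `X₀`, and let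
`π` be a probability density on `[0,1]` such that for all `0 < b < 1` there is `0 < a < b`
with `∫_a^b π > 0`.  Then the integrated test supermartingale
`M n (π) = ∫_0^1 (∏_{i<n} ((1−c) + c·X i/μ)) π(c) dc` tends to `+∞` almost surely. -/
theorem integrated_test_supermartingale_tendsto_top
    {Ω : Type*} {mΩ : MeasurableSpace Ω} (P : Measure Ω) [IsProbabilityMeasure P]
    (μ : ℝ) (hμ : 0 < μ)
    (X₀ : Ω → ℝ) (hX₀int : Integrable X₀ P) (hX₀pos : ∀ᵐ ω ∂P, 0 ≤ X₀ ω)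
    (hEX₀ : μ < ∫ ω, X₀ ω ∂P)
    (X : ℕ → Ω → ℝ)
    (hindep : iIndepFun X P)
    (hident : ∀ i, IdentDistrib (X i) X₀ P P)
    (π : ℝ → ℝ) (hπmeas : Measurable π)
    (hπ0 : ∀ c ∈ Set.Icc (0 : ℝ) 1, 0 ≤ π c)
    (hπ1 : ∫ c in (0 : ℝ)..1, π c = 1)
    (hπint : IntervalIntegrable π volume 0 1)
    (hπpos : ∀ b ∈ Set.Ioo (0 : ℝ) 1, ∃ a, 0 < a ∧ a < b ∧ 0 < ∫ c in a..b, π c) :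
    ∀ᵐ ω ∂P, Tendsto
      (fun n => ∫ c in (0 : ℝ)..1,
        (∏ i ∈ Finset.range n, ((1 - c) + c * X i ω / μ)) * π c) atTop atTop :=
  integrated_test_supermartingale_tendsto_top_general (mΩ := mΩ) P μ hμ X₀ hX₀int hX₀pos hEX₀ X
    hindep hident π hπ0 hπint hπpos
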